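/- arXiv:2605.23734 — 3 statements merged into one kernel-verified Lean document; each statement's English description precedes it below -/
import Mathlib

section
/- Let t ↦ A(t) and t ↦ B(t) be norm-continuous maps from ℝ to the bounded operators on a Hilbert space H with A(0) = B(0) = 0. Set Λ_A(t) = exp(A(t)) and Λ_B(t) = exp(B(t)). Then there exist constants C > 0 and r > 0 such that ‖A(t) − B(t)‖ ≤ C ‖Λ_A(t) − Λ_B(t)‖ for all |t| ≤ r. -/
/-!
No logarithm is needed: comparing `exp` with its linear part termwise, using
`‖xⁿ - yⁿ‖ ≤ n Mⁿ⁻¹ ‖x - y‖`, shows that `exp - id` is Lipschitz with constant `e^M - 1` on the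
ball of radius `M`, so `(2 - e^M) ‖x - y‖ ≤ ‖exp x - exp y‖` there. By continuity `A t` and `B t`
lie in the ball of radius `log (3/2)` for small `t`, which gives `C = 2`.
-/

open NormedSpace Nat

section

variable {𝔸 : Type*} [NormedRing 𝔸]

theorem norm_pow_succ_sub_pow_succ_le {x y : 𝔸} {M : ℝ} (hx : ‖x‖ ≤ M) (hy : ‖y‖ ≤ M) (n : ℕ) :
    ‖x ^ (n + 1) - y ^ (n + 1)‖ ≤ (n + 1) * M ^ n * ‖x - y‖ := by
  induction n with
  | zero => simp
  | succ n ih =>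
    have hM : 0 ≤ M := (norm_nonneg x).trans hx
    have hyn : ‖y ^ (n + 1)‖ ≤ M ^ (n + 1) :=
      (norm_pow_le' y n.succ_pos).trans (pow_le_pow_left₀ (norm_nonneg y) hy _)
    calc ‖x ^ (n + 2) - y ^ (n + 2)‖
        = ‖x * (x ^ (n + 1) - y ^ (n + 1)) + (x - y) * y ^ (n + 1)‖ := by
          congr 1; rw [pow_succ' x, pow_succ' y]; noncomm_ring
      _ ≤ ‖x‖ * ‖x ^ (n + 1) - y ^ (n + 1)‖ + ‖x - y‖ * ‖y ^ (n + 1)‖ :=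
          (norm_add_le _ _).trans (add_le_add (norm_mul_le _ _) (norm_mul_le _ _))
      _ ≤ M * ((n + 1) * M ^ n * ‖x - y‖) + ‖x - y‖ * M ^ (n + 1) := by gcongr
      _ = (↑(n + 1) + 1) * M ^ (n + 1) * ‖x - y‖ := by push_cast; ring

variable [NormedAlgebra ℝ 𝔸] [CompleteSpace 𝔸]

theorem hasSum_exp_sub_exp_sub_sub (x y : 𝔸) :
    HasSum (fun n : ℕ => ((n + 2)! ⁻¹ : ℝ) • (x ^ (n + 2) - y ^ (n + 2)))
      (exp x - exp y - (x - y)) := by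
  have h := ((exp_series_hasSum_exp' (𝕂 := ℝ) x).sub (exp_series_hasSum_exp' (𝕂 := ℝ) y))
  simp_rw [← smul_sub] at h
  simpa [Finset.sum_range_succ] using (hasSum_nat_add_iff' 2).mpr h

theorem Real.hasSum_exp_sub_one (M : ℝ) :
    HasSum (fun n : ℕ => M ^ (n + 1) / (n + 1)!) (Real.exp M - 1) := by
  have h := expSeries_div_hasSum_exp M
  rw [← Real.exp_eq_exp_ℝ] at h
  simpa using (hasSum_nat_add_iff' 1).mpr h

theorem norm_exp_sub_exp_sub_sub_le {x y : 𝔸} {M : ℝ} (hx : ‖x‖ ≤ M) (hy : ‖y‖ ≤ M) :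
    ‖exp x - exp y - (x - y)‖ ≤ (Real.exp M - 1) * ‖x - y‖ := by
  refine (hasSum_exp_sub_exp_sub_sub x y).norm_le_of_bounded
    ((Real.hasSum_exp_sub_one M).mul_right ‖x - y‖) fun n => ?_
  rw [norm_smul, norm_inv, Real.norm_natCast]
  calc ((n + 2)! : ℝ)⁻¹ * ‖x ^ (n + 2) - y ^ (n + 2)‖
      ≤ ((n + 2)! : ℝ)⁻¹ * ((n + 2) * M ^ (n + 1) * ‖x - y‖) := by
        gcongr; exact_mod_cast norm_pow_succ_sub_pow_succ_le hx hy (n + 1)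
    _ = M ^ (n + 1) / (n + 1)! * ‖x - y‖ := by
        rw [factorial_succ (n + 1)]; push_cast; field_simp; ring

theorem mul_norm_sub_le_norm_exp_sub_exp {x y : 𝔸} {M : ℝ} (hx : ‖x‖ ≤ M) (hy : ‖y‖ ≤ M) :
    (2 - Real.exp M) * ‖x - y‖ ≤ ‖exp x - exp y‖ := by
  have h := norm_sub_le (exp x - exp y) (exp x - exp y - (x - y))
  rw [sub_sub_cancel] at h
  linarith [norm_exp_sub_exp_sub_sub_le hx hy]

end

/-- **logarithm estimate.** Let `t ↦ A(t)` and `t ↦ B(t)` be norm-continuous maps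
from `ℝ` to the bounded operators on a Hilbert space `H` with `A(0) = B(0) = 0`. Setting
`Λ_A(t) = exp(A(t))` and `Λ_B(t) = exp(B(t))`, there exist constants `C > 0` and `r > 0` such that
`‖A(t) − B(t)‖ ≤ C ‖Λ_A(t) − Λ_B(t)‖` for all `|t| ≤ r`. -/
theorem log_estimate_near_zero
    {H : Type*} [NormedAddCommGroup H] [InnerProductSpace ℂ H] [CompleteSpace H]
    (A B : ℝ → H →L[ℂ] H)
    (hA : Continuous A) (hB : Continuous B) (hA0 : A 0 = 0) (hB0 : B 0 = 0) :
    ∃ (C r : ℝ), 0 < C ∧ 0 < r ∧ ∀ t : ℝ, |t| ≤ r →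
      ‖A t - B t‖ ≤ C * ‖NormedSpace.exp (A t) - NormedSpace.exp (B t)‖ := by
  set M := Real.log (3 / 2)
  have hsmall : ∀ᶠ t in nhds (0 : ℝ), ‖A t‖ ≤ M ∧ ‖B t‖ ≤ M := by
    have hball : Metric.closedBall (0 : H →L[ℂ] H) M ∈ nhds 0 :=
      Metric.closedBall_mem_nhds 0 (Real.log_pos (by norm_num))
    filter_upwards [hA.tendsto' 0 0 hA0 hball, hB.tendsto' 0 0 hB0 hball] with t hAt hBt
    exact ⟨mem_closedBall_zero_iff.mp hAt, mem_closedBall_zero_iff.mp hBt⟩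
  obtain ⟨r, hr, hsmall_r⟩ := Metric.nhds_basis_closedBall.eventually_iff.mp hsmall
  refine ⟨2, r, two_pos, hr, fun t ht => ?_⟩
  obtain ⟨hAt, hBt⟩ := hsmall_r (x := t) (by rwa [Metric.mem_closedBall, Real.dist_eq, sub_zero])
  have h := mul_norm_sub_le_norm_exp_sub_exp hAt hBt
  rw [Real.exp_log (by norm_num)] at h
  linarith
end

section
/- Let A and B be self-adjoint operators on a Hilbert space H with D(A^m) = D(B^m) for all m ∈ ℕ. Then for every m ∈ ℕ and s, t ∈ ℝ, the operator A^m e^{isA} e^{itB} is both A^m-bounded and B^m-bounded; that is, there exist constants a, b ≥ 0 such that ‖A^m e^{isA} e^{itB} ψ‖ ≤ a‖A^m ψ‖ + b‖ψ‖ for all ψ ∈ D(A^m) (and similarly with B^m in place of A^m on the right). -/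
/-!
For a self-adjoint `A`, Cauchy–Schwarz gives `‖A^(k+1) ψ‖² ≤ ‖A^k ψ‖ ‖A^(k+2) ψ‖`, so
`k ↦ ‖A^k ψ‖` is log-convex and `‖A ψ‖ ≤ max ‖ψ‖ ‖A^m ψ‖`. Hence the graph norm of `A^m` controls
`A`, and closedness of `A` propagates to every power `A^m`. The closed operators `A^m` and `B^m`
share their domain, so by the closed graph theorem each is bounded relative to the other. Finally
`e^{isA}` commutes with `A` on `D` (differentiate `r ↦ e^{i(s+r)A} ψ` at `0` in two ways), hence
with `A^m`, and it is isometric, so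
`‖A^m e^{isA} e^{itB} ψ‖ = ‖A^m e^{itB} ψ‖ ≤ C (‖B^m e^{itB} ψ‖ + ‖ψ‖) = C (‖B^m ψ‖ + ‖ψ‖)`.
-/

/-- Domain of the `m`-th power of an unbounded operator encoded by a global function `f`
together with its domain `D`: `D(A⁰) = H` and `D(A^{m+1}) = {ψ ∈ D : f ψ ∈ D(A^m)}`. -/
def powDom {H : Type*} (f : H → H) (D : Set H) : ℕ → Set H
  | 0 => Set.univ
  | m + 1 => {ψ | ψ ∈ D ∧ f ψ ∈ powDom f D m}

open Filter Topology
open scoped InnerProductSpace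

theorem le_max_of_forall_sq_le_mul {a : ℕ → ℝ} (ha : ∀ k, 0 ≤ a k) {m : ℕ}
    (h : ∀ k, k + 2 ≤ m → a (k + 1) ^ 2 ≤ a k * a (k + 2)) {k : ℕ} (hk : k ≤ m) :
    a k ≤ max (a 0) (a m) := by
  induction m generalizing k with
  | zero => simp [Nat.le_zero.1 hk]
  | succ n ih =>
    have ih : ∀ {j}, j ≤ n → a j ≤ max (a 0) (a n) := ih fun j hj => h j (by omega)
    rcases Nat.of_le_succ hk with hk | rfl
    · suffices a n ≤ max (a 0) (a (n + 1)) from (ih hk).trans (max_le (le_max_left _ _) this)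
      cases n with
      | zero => exact le_max_left _ _
      | succ n =>
        -- an interior maximum would contradict `a (n+1) ^ 2 ≤ a n * a (n+2)`
        by_contra! hlt
        have hmid : a n ≤ a (n + 1) :=
          (ih n.le_succ).trans (max_le ((le_max_left _ _).trans hlt.le) le_rfl)
        nlinarith [h n le_rfl, ha n, ha (n + 2), le_max_right (a 0) (a (n + 2))]
    · exact le_max_right _ _

section powDom

variable {H : Type*} {f V : H → H} {D : Set H}

theorem iterate_mem_of_mem_powDom {m k : ℕ} {ψ : H} (hψ : ψ ∈ powDom f D m) (hk : k < m) :
    f^[k] ψ ∈ D := by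
  induction m generalizing k ψ with
  | zero => omega
  | succ m ih =>
    cases k with
    | zero => exact hψ.1
    | succ k => exact ih (k := k) hψ.2 (by omega)

theorem mapsTo_powDom (hV : ∀ ψ ∈ D, V ψ ∈ D) (hfV : ∀ ψ ∈ D, f (V ψ) = V (f ψ)) (m : ℕ) :
    Set.MapsTo V (powDom f D m) (powDom f D m) := by
  induction m with
  | zero => exact Set.mapsTo_univ _ _
  | succ m ih => exact fun ψ hψ => ⟨hV ψ hψ.1, hfV ψ hψ.1 ▸ ih hψ.2⟩

theorem iterate_comm_of_mem_powDom (hfV : ∀ ψ ∈ D, f (V ψ) = V (f ψ)) {m : ℕ} {ψ : H}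
    (hψ : ψ ∈ powDom f D m) : f^[m] (V ψ) = V (f^[m] ψ) := by
  induction m generalizing ψ with
  | zero => rfl
  | succ m ih =>
    rw [Function.iterate_succ_apply, hfV ψ hψ.1, ih hψ.2, Function.iterate_succ_apply]

end powDom

namespace LinearPMap

variable {𝕜 E F : Type*} [NontriviallyNormedField 𝕜] [NormedAddCommGroup E] [NormedSpace 𝕜 E]
  [CompleteSpace E] [NormedAddCommGroup F] [NormedSpace 𝕜 F] [CompleteSpace F]

theorem exists_bound_of_isClosed_of_domain_le {S T : E →ₗ.[𝕜] F} (hS : S.IsClosed)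
    (hT : T.IsClosed) (h : S.domain ≤ T.domain) :
    ∃ C, 0 ≤ C ∧ ∀ x : S.domain, ‖T (Submodule.inclusion h x)‖ ≤ C * (‖S x‖ + ‖(x : E)‖) := by
  have : CompleteSpace S.graph := hS.completeSpace_coe
  let proj : S.graph →ₗ[𝕜] S.domain :=
    ((LinearMap.fst 𝕜 E F).comp S.graph.subtype).codRestrict S.domain fun p =>
      S.mem_domain_of_mem_graph p.2
  let L : S.graph →ₗ[𝕜] F := T.toFun ∘ₗ Submodule.inclusion h ∘ₗ proj
  have hL : Continuous L := L.continuous_of_seq_closed_graph fun u p y hu hy => by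
    have hlim : ((p : E × F).1, y) ∈ T.graph :=
      hT.mem_of_tendsto (((continuous_fst.comp continuous_subtype_val).tendsto p).comp hu
        |>.prodMk_nhds hy)
        (Eventually.of_forall fun n => T.mem_graph (Submodule.inclusion h (proj (u n))))
    exact T.mem_graph_snd_inj hlim (T.mem_graph _) rfl
  let L' : S.graph →L[𝕜] F := ⟨L, hL⟩
  refine ⟨‖L'‖, L'.opNorm_nonneg, fun x => ?_⟩
  calc ‖T (Submodule.inclusion h x)‖ = ‖L' ⟨_, S.mem_graph x⟩‖ := rfl
    _ ≤ ‖L'‖ * ‖((x : E), S x)‖ := L'.le_opNorm _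
    _ ≤ _ * (‖S x‖ + ‖(x : E)‖) := by
      gcongr
      exact max_le (le_add_of_nonneg_left (norm_nonneg _))
        (le_add_of_nonneg_right (norm_nonneg _))

end LinearPMap

theorem apply_comm_of_hasDerivAt {E : Type*} [NormedAddCommGroup E] [NormedSpace ℂ E]
    {U : ℝ → E →L[ℂ] E} {f : E → E} {x : E} (hU0 : U 0 = 1)
    (hU : ∀ s t, U (s + t) = (U s).comp (U t))
    (hx : ∀ t, HasDerivAt (fun r => U r x) (Complex.I • f (U t x)) t) (t : ℝ) :
    f (U t x) = U t (f x) := by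
  have hshift : HasDerivAt (fun r => U (t + r) x) (Complex.I • f (U t x)) 0 :=
    HasDerivAt.comp_const_add t 0 (by simpa using hx t)
  have hfactor : HasDerivAt (fun r => U (t + r) x) (U t (Complex.I • f x)) 0 := by
    simpa [hU, hU0, Function.comp_def] using
      ((U t).restrictScalars ℝ).hasFDerivAt.comp_hasDerivAt 0 (hx 0)
  rw [map_smul] at hfactor
  exact smul_right_injective E Complex.I_ne_zero (hshift.unique hfactor)

section Hilbert

variable {H : Type*} [NormedAddCommGroup H] [InnerProductSpace ℂ H]

def IsSymmetricOn (D : Submodule ℂ H) (f : H → H) : Prop :=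
  ∀ ψ ∈ D, ∀ φ ∈ D, ⟪f ψ, φ⟫_ℂ = ⟪ψ, f φ⟫_ℂ

structure IsSelfAdjointOn (D : Submodule ℂ H) (f : H → H) : Prop where
  isSymmetricOn : IsSymmetricOn D f
  mem_of_mem_adjoint_domain : ∀ φ : H, (∃ η : H, ∀ ψ ∈ D, ⟪φ, f ψ⟫_ℂ = ⟪η, ψ⟫_ℂ) → φ ∈ D

namespace IsSymmetricOn

variable {D : Submodule ℂ H} {f : H → H}

theorem map_add (hD : Dense (D : Set H)) (hf : IsSymmetricOn D f) {ψ φ : H} (hψ : ψ ∈ D)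
    (hφ : φ ∈ D) : f (ψ + φ) = f ψ + f φ :=
  hD.eq_of_inner_left ℂ fun χ hχ => by
    rw [hf _ (D.add_mem hψ hφ) _ hχ, inner_add_left, inner_add_left, hf _ hψ _ hχ,
      hf _ hφ _ hχ]

theorem map_sub (hD : Dense (D : Set H)) (hf : IsSymmetricOn D f) {ψ φ : H} (hψ : ψ ∈ D)
    (hφ : φ ∈ D) : f (ψ - φ) = f ψ - f φ :=
  hD.eq_of_inner_left ℂ fun χ hχ => by
    rw [hf _ (D.sub_mem hψ hφ) _ hχ, inner_sub_left, inner_sub_left, hf _ hψ _ hχ,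
      hf _ hφ _ hχ]

theorem map_smul (hD : Dense (D : Set H)) (hf : IsSymmetricOn D f) (c : ℂ) {ψ : H}
    (hψ : ψ ∈ D) : f (c • ψ) = c • f ψ :=
  hD.eq_of_inner_left ℂ fun χ hχ => by
    rw [hf _ (D.smul_mem c hψ) _ hχ, inner_smul_left, inner_smul_left, hf _ hψ _ hχ]

theorem map_zero (hD : Dense (D : Set H)) (hf : IsSymmetricOn D f) : f 0 = 0 := by
  simpa using hf.map_smul hD 0 D.zero_mem

theorem zero_mem_powDom (hD : Dense (D : Set H)) (hf : IsSymmetricOn D f) (m : ℕ) :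
    (0 : H) ∈ powDom f D m := by
  induction m with
  | zero => trivial
  | succ m ih => exact ⟨D.zero_mem, (hf.map_zero hD).symm ▸ ih⟩

theorem add_mem_powDom (hD : Dense (D : Set H)) (hf : IsSymmetricOn D f) {m : ℕ} {ψ φ : H}
    (hψ : ψ ∈ powDom f D m) (hφ : φ ∈ powDom f D m) : ψ + φ ∈ powDom f D m := by
  induction m generalizing ψ φ with
  | zero => trivial
  | succ m ih => exact ⟨D.add_mem hψ.1 hφ.1, hf.map_add hD hψ.1 hφ.1 ▸ ih hψ.2 hφ.2⟩

theorem smul_mem_powDom (hD : Dense (D : Set H)) (hf : IsSymmetricOn D f) (c : ℂ) {m : ℕ}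
    {ψ : H} (hψ : ψ ∈ powDom f D m) : c • ψ ∈ powDom f D m := by
  induction m generalizing ψ with
  | zero => trivial
  | succ m ih => exact ⟨D.smul_mem c hψ.1, hf.map_smul hD c hψ.1 ▸ ih hψ.2⟩

theorem iterate_add (hD : Dense (D : Set H)) (hf : IsSymmetricOn D f) {m : ℕ} {ψ φ : H}
    (hψ : ψ ∈ powDom f D m) (hφ : φ ∈ powDom f D m) :
    f^[m] (ψ + φ) = f^[m] ψ + f^[m] φ := by
  induction m generalizing ψ φ with
  | zero => rfl
  | succ m ih =>
    simp only [Function.iterate_succ_apply, hf.map_add hD hψ.1 hφ.1, ih hψ.2 hφ.2]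

theorem iterate_smul (hD : Dense (D : Set H)) (hf : IsSymmetricOn D f) (c : ℂ) {m : ℕ}
    {ψ : H} (hψ : ψ ∈ powDom f D m) : f^[m] (c • ψ) = c • f^[m] ψ := by
  induction m generalizing ψ with
  | zero => rfl
  | succ m ih => simp only [Function.iterate_succ_apply, hf.map_smul hD c hψ.1, ih hψ.2]

def powDomSubmodule (hD : Dense (D : Set H)) (hf : IsSymmetricOn D f) (m : ℕ) :
    Submodule ℂ H where
  carrier := powDom f D m
  zero_mem' := hf.zero_mem_powDom hD m
  add_mem' := hf.add_mem_powDom hD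
  smul_mem' c _ := hf.smul_mem_powDom hD c

def iteratePMap (hD : Dense (D : Set H)) (hf : IsSymmetricOn D f) (m : ℕ) : H →ₗ.[ℂ] H where
  domain := hf.powDomSubmodule hD m
  toFun :=
    { toFun := fun ψ => f^[m] ψ
      map_add' := fun ψ φ => hf.iterate_add hD ψ.2 φ.2
      map_smul' := fun c ψ => hf.iterate_smul hD c ψ.2 }

theorem mem_graph_iteratePMap (hD : Dense (D : Set H)) (hf : IsSymmetricOn D f) (m : ℕ)
    {p : H × H} : p ∈ (hf.iteratePMap hD m).graph ↔ p.1 ∈ powDom f D m ∧ f^[m] p.1 = p.2 := by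
  obtain ⟨x, y⟩ := p
  rw [LinearPMap.mem_graph_iff]
  constructor
  · rintro ⟨ψ, rfl, rfl⟩
    exact ⟨ψ.2, rfl⟩
  · rintro ⟨hx, hy⟩
    exact ⟨⟨x, hx⟩, rfl, hy⟩

theorem iterate_sub (hD : Dense (D : Set H)) (hf : IsSymmetricOn D f) {m : ℕ} {ψ φ : H}
    (hψ : ψ ∈ powDom f D m) (hφ : φ ∈ powDom f D m) :
    f^[m] (ψ - φ) = f^[m] ψ - f^[m] φ :=
  _root_.map_sub (hf.iteratePMap hD m).toFun ⟨ψ, hψ⟩ ⟨φ, hφ⟩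

theorem sq_norm_le {ψ : H} (hf : IsSymmetricOn D f) (hψ : ψ ∈ D) (hfψ : f ψ ∈ D) :
    ‖f ψ‖ ^ 2 ≤ ‖ψ‖ * ‖f (f ψ)‖ := by
  calc ‖f ψ‖ ^ 2 = RCLike.re ⟪f ψ, f ψ⟫_ℂ := (inner_self_eq_norm_sq _).symm
    _ = RCLike.re ⟪ψ, f (f ψ)⟫_ℂ := by rw [hf _ hψ _ hfψ]
    _ ≤ ‖ψ‖ * ‖f (f ψ)‖ := re_inner_le_norm _ _

theorem norm_iterate_le_max (hf : IsSymmetricOn D f) {m : ℕ} {ψ : H} (hψ : ψ ∈ powDom f D m)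
    {k : ℕ} (hk : k ≤ m) : ‖f^[k] ψ‖ ≤ max ‖ψ‖ ‖f^[m] ψ‖ := by
  refine le_max_of_forall_sq_le_mul (a := fun k => ‖f^[k] ψ‖) (fun _ => norm_nonneg _)
    (fun j hj => ?_) hk
  have hj₁ := iterate_mem_of_mem_powDom hψ (k := j + 1) (by omega)
  rw [Function.iterate_succ_apply'] at hj₁
  simpa only [Function.iterate_succ_apply'] using
    hf.sq_norm_le (iterate_mem_of_mem_powDom hψ (k := j) (by omega)) hj₁

theorem dist_le_dist_graph (hD : Dense (D : Set H)) (hf : IsSymmetricOn D f) {m : ℕ}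
    {ψ φ : H} (hψ : ψ ∈ powDom f D (m + 1)) (hφ : φ ∈ powDom f D (m + 1)) :
    dist (f ψ) (f φ) ≤ dist (ψ, f^[m + 1] ψ) (φ, f^[m + 1] φ) := by
  rw [Prod.dist_eq, dist_eq_norm, dist_eq_norm, dist_eq_norm, ← hf.map_sub hD hψ.1 hφ.1,
    ← hf.iterate_sub hD hψ hφ]
  exact hf.norm_iterate_le_max ((hf.powDomSubmodule hD (m + 1)).sub_mem hψ hφ) (k := 1)
    (by omega)

end IsSymmetricOn

namespace IsSelfAdjointOn

variable {D : Submodule ℂ H} {f g : H → H}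

theorem mem_of_tendsto (hD : Dense (D : Set H)) (hf : IsSelfAdjointOn D f) {ψ : ℕ → H}
    {x y : H} (hψ : ∀ n, ψ n ∈ D) (hx : Tendsto ψ atTop (𝓝 x))
    (hy : Tendsto (fun n => f (ψ n)) atTop (𝓝 y)) : x ∈ D ∧ f x = y := by
  have hadj : ∀ χ ∈ D, ⟪x, f χ⟫_ℂ = ⟪y, χ⟫_ℂ := fun χ hχ =>
    tendsto_nhds_unique (hx.inner (𝕜 := ℂ) tendsto_const_nhds) <| by
      simpa only [fun n => hf.isSymmetricOn _ (hψ n) _ hχ] using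
        hy.inner (𝕜 := ℂ) (tendsto_const_nhds (x := χ))
  have hxD : x ∈ D := hf.mem_of_mem_adjoint_domain x ⟨y, hadj⟩
  exact ⟨hxD, hD.eq_of_inner_left ℂ fun χ hχ => by
    rw [hf.isSymmetricOn _ hxD _ hχ, hadj χ hχ]⟩

variable [CompleteSpace H]

theorem mem_powDom_of_tendsto (hD : Dense (D : Set H)) (hf : IsSelfAdjointOn D f) {m : ℕ}
    {ψ : ℕ → H} {x y : H} (hψ : ∀ n, ψ n ∈ powDom f D m) (hx : Tendsto ψ atTop (𝓝 x))
    (hy : Tendsto (fun n => f^[m] (ψ n)) atTop (𝓝 y)) : x ∈ powDom f D m ∧ f^[m] x = y := by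
  induction m generalizing ψ x y with
  | zero => exact ⟨trivial, tendsto_nhds_unique hx hy⟩
  | succ m ih =>
    have hcauchy : CauchySeq fun n => f (ψ n) := by
      refine Metric.cauchySeq_iff.2 fun ε hε => ?_
      obtain ⟨N, hN⟩ := Metric.cauchySeq_iff.1 (hx.prodMk_nhds hy).cauchySeq ε hε
      exact ⟨N, fun i hi j hj =>
        (hf.isSymmetricOn.dist_le_dist_graph hD (hψ i) (hψ j)).trans_lt (hN i hi j hj)⟩
    obtain ⟨z, hz⟩ := cauchySeq_tendsto_of_complete hcauchy
    obtain ⟨hxD, rfl⟩ := hf.mem_of_tendsto hD (fun n => (hψ n).1) hx hz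
    obtain ⟨hfx, hfy⟩ := ih (fun n => (hψ n).2) hz hy
    exact ⟨⟨hxD, hfx⟩, hfy⟩

theorem isClosed_iteratePMap (hD : Dense (D : Set H)) (hf : IsSelfAdjointOn D f) (m : ℕ) :
    (hf.isSymmetricOn.iteratePMap hD m).IsClosed := by
  refine IsSeqClosed.isClosed fun p q hp hpq => ?_
  simp only [SetLike.mem_coe, IsSymmetricOn.mem_graph_iteratePMap] at hp ⊢
  refine hf.mem_powDom_of_tendsto hD (fun n => (hp n).1) hpq.fst_nhds ?_
  simpa only [fun n => (hp n).2] using hpq.snd_nhds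

theorem exists_bound_iterate (hD : Dense (D : Set H)) (hf : IsSelfAdjointOn D f)
    (hg : IsSelfAdjointOn D g) {m : ℕ} (h : powDom g D m ⊆ powDom f D m) :
    ∃ C, 0 ≤ C ∧ ∀ ψ ∈ powDom g D m, ‖f^[m] ψ‖ ≤ C * (‖g^[m] ψ‖ + ‖ψ‖) := by
  obtain ⟨C, hC, hbound⟩ := LinearPMap.exists_bound_of_isClosed_of_domain_le
    (hg.isClosed_iteratePMap hD m) (hf.isClosed_iteratePMap hD m) h
  exact ⟨C, hC, fun ψ hψ => hbound ⟨ψ, hψ⟩⟩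

end IsSelfAdjointOn

end Hilbert

/-- Let `A` and `B` be self-adjoint operators on a Hilbert space `H` (encoded by
`fA`, `fB` with common dense domain `D`, symmetric and with adjoint domains contained in `D`) such
that `D(A^m) = D(B^m)` for all `m ∈ ℕ`, and let `(UA s) = e^{isA}` and `(UB t) = e^{itB}` be the
associated unitary groups (characterized by the group law, unitarity, invariance of `D` and the
Schrödinger equation on `D`). Then for every `m ∈ ℕ` and `s, t ∈ ℝ`, the operator
`A^m e^{isA} e^{itB}` is both `A^m`-bounded and `B^m`-bounded: there exist `a, b ≥ 0` with
`‖A^m e^{isA} e^{itB} ψ‖ ≤ a ‖A^m ψ‖ + b ‖ψ‖` for all `ψ ∈ D(A^m)` (in particular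
`e^{isA} e^{itB} ψ ∈ D(A^m)`), and similarly with `B^m` in place of `A^m` on the right. -/
theorem power_relatively_bounded_through_unitary_groups
    {H : Type*} [NormedAddCommGroup H] [InnerProductSpace ℂ H] [CompleteSpace H]
    (D : Submodule ℂ H) (hdense : Dense (D : Set H))
    (fA fB : H → H)
    (hsymA : ∀ ψ ∈ D, ∀ φ ∈ D, (inner ℂ (fA ψ) φ : ℂ) = inner ℂ ψ (fA φ))
    (hsaA : ∀ φ : H, (∃ η : H, ∀ ψ ∈ D, (inner ℂ φ (fA ψ) : ℂ) = inner ℂ η ψ) → φ ∈ D)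
    (hsymB : ∀ ψ ∈ D, ∀ φ ∈ D, (inner ℂ (fB ψ) φ : ℂ) = inner ℂ ψ (fB φ))
    (hsaB : ∀ φ : H, (∃ η : H, ∀ ψ ∈ D, (inner ℂ φ (fB ψ) : ℂ) = inner ℂ η ψ) → φ ∈ D)
    (hdom : ∀ m : ℕ, powDom fA (D : Set H) m = powDom fB (D : Set H) m)
    (UA UB : ℝ → H →L[ℂ] H)
    (hUA0 : UA 0 = 1) (hUB0 : UB 0 = 1)
    (hUAgrp : ∀ s t : ℝ, UA (s + t) = (UA s).comp (UA t))
    (hUBgrp : ∀ s t : ℝ, UB (s + t) = (UB s).comp (UB t))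
    (hUAiso : ∀ (t : ℝ) (ψ : H), ‖UA t ψ‖ = ‖ψ‖)
    (hUBiso : ∀ (t : ℝ) (ψ : H), ‖UB t ψ‖ = ‖ψ‖)
    (hUAD : ∀ (t : ℝ), ∀ ψ ∈ D, UA t ψ ∈ D)
    (hUBD : ∀ (t : ℝ), ∀ ψ ∈ D, UB t ψ ∈ D)
    (hUAder : ∀ ψ ∈ D, ∀ t : ℝ,
      HasDerivAt (fun r => UA r ψ) (Complex.I • fA (UA t ψ)) t)
    (hUBder : ∀ ψ ∈ D, ∀ t : ℝ,
      HasDerivAt (fun r => UB r ψ) (Complex.I • fB (UB t ψ)) t)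
    (m : ℕ) (s t : ℝ) :
    (∃ a b : ℝ, 0 ≤ a ∧ 0 ≤ b ∧ ∀ ψ ∈ powDom fA (D : Set H) m,
        UA s (UB t ψ) ∈ powDom fA (D : Set H) m ∧
        ‖fA^[m] (UA s (UB t ψ))‖ ≤ a * ‖fA^[m] ψ‖ + b * ‖ψ‖)
    ∧ (∃ a' b' : ℝ, 0 ≤ a' ∧ 0 ≤ b' ∧ ∀ ψ ∈ powDom fB (D : Set H) m,
        UA s (UB t ψ) ∈ powDom fA (D : Set H) m ∧
        ‖fA^[m] (UA s (UB t ψ))‖ ≤ a' * ‖fB^[m] ψ‖ + b' * ‖ψ‖) := by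
  have hA : IsSelfAdjointOn D fA := ⟨hsymA, hsaA⟩
  have hB : IsSelfAdjointOn D fB := ⟨hsymB, hsaB⟩
  obtain ⟨C₁, hC₁, hAB⟩ := hA.exists_bound_iterate hdense hB (hdom m).ge
  obtain ⟨C₂, hC₂, hBA⟩ := hB.exists_bound_iterate hdense hA (hdom m).le
  have hAcomm : ∀ ψ ∈ D, fA (UA s ψ) = UA s (fA ψ) := fun ψ hψ =>
    apply_comm_of_hasDerivAt hUA0 hUAgrp (hUAder ψ hψ) s
  have hBcomm : ∀ ψ ∈ D, fB (UB t ψ) = UB t (fB ψ) := fun ψ hψ =>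
    apply_comm_of_hasDerivAt hUB0 hUBgrp (hUBder ψ hψ) t
  have key : ∀ ψ ∈ powDom fB D m, UA s (UB t ψ) ∈ powDom fA D m ∧
      ‖fA^[m] (UA s (UB t ψ))‖ ≤ C₁ * (‖fB^[m] ψ‖ + ‖ψ‖) := by
    intro ψ hψ
    have hUψ : UB t ψ ∈ powDom fB D m := mapsTo_powDom (hUBD t) hBcomm m hψ
    have hUψA : UB t ψ ∈ powDom fA D m := hdom m ▸ hUψ
    refine ⟨mapsTo_powDom (hUAD s) hAcomm m hUψA, ?_⟩
    calc ‖fA^[m] (UA s (UB t ψ))‖ = ‖fA^[m] (UB t ψ)‖ := by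
          rw [iterate_comm_of_mem_powDom hAcomm hUψA, hUAiso]
      _ ≤ C₁ * (‖fB^[m] (UB t ψ)‖ + ‖UB t ψ‖) := hAB _ hUψ
      _ = C₁ * (‖fB^[m] ψ‖ + ‖ψ‖) := by
          rw [iterate_comm_of_mem_powDom hBcomm hψ, hUBiso, hUBiso]
  refine ⟨⟨C₁ * C₂, C₁ * C₂ + C₁, by positivity, by positivity, fun ψ hψ => ?_⟩,
    ⟨C₁, C₁, hC₁, hC₁, fun ψ hψ => (key ψ hψ).imp_right fun h => h.trans_eq (by ring)⟩⟩
  obtain ⟨hmem, hle⟩ := key ψ (hdom m ▸ hψ)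
  refine ⟨hmem, hle.trans ?_⟩
  linarith [mul_le_mul_of_nonneg_left (hBA ψ hψ) hC₁]
end

section
/- Let H₀ be self-adjoint and V symmetric on a Hilbert space H with D(H₀) ⊆ D(V) and ‖Vψ‖ ≤ a‖H₀ψ‖ + b‖ψ‖ for all ψ ∈ D(H₀), for some constants a, b ≥ 0. Then for every m ∈ ℕ there exist constants cₘ, dₘ ≥ 0 (independent of T) such that for all 0 < T < min(1, 1/((2^m−1)a)) and all ψ ∈ D(H₀^m): ‖((1/T)H₀ + V)^m ψ‖ ≤ cₘ T^{−m} ‖H₀^m ψ‖ + dₘ T^{−m} ‖ψ‖. -/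
/-! Write `A = T⁻¹ H₀ + V` and induct on `m` via `A^{m+1} ψ = A^m (A ψ)`. The inductive bound for
`A ψ` involves `‖H₀^m A ψ‖ ≤ T⁻¹ ‖H₀^{m+1} ψ‖ + ‖H₀^m V ψ‖`, which the relative bound of `H₀^m V`
controls, and `‖A ψ‖ ≤ T⁻¹ ((1 + a) ‖H₀ ψ‖ + b ‖ψ‖)`, where `1 ≤ T⁻¹` absorbs the unscaled terms.
The lower-order term `‖H₀ ψ‖` is dominated by `max ‖ψ‖ ‖H₀^n ψ‖`: by symmetry
`‖H₀^{k+1} ψ‖² = ⟪H₀^k ψ, H₀^{k+2} ψ⟫`, so `k ↦ ‖H₀^k ψ‖` is log-convex and attains its maximum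
on `[0, n]` at an endpoint. Symmetry on a dense domain also makes `H₀` linear there, which is what
expands `H₀^m (A ψ)`. -/

theorem mem_powDom_iff {α : Type*} {f : α → α} {D : Set α} {n : ℕ} {ψ : α} :
    ψ ∈ powDom f D n ↔ ∀ k < n, f^[k] ψ ∈ D := by
  induction n generalizing ψ with
  | zero => simp [powDom]
  | succ n ih =>
    simp only [powDom, Set.mem_ofPred_eq, ih, Nat.forall_lt_succ_left,
      Function.iterate_zero_apply, Function.iterate_succ_apply]

theorem iterate_smul_add_of_mem_powDom {R M : Type*} [Semiring R] [AddCommMonoid M]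
    [Module R M] {D : Submodule R M} {f : M → M}
    (hlin : ∀ c : R, ∀ x ∈ D, ∀ y ∈ D, f (c • x + y) = c • f x + f y) (c : R) {k : ℕ}
    {x y : M} (hx : x ∈ powDom f (D : Set M) k) (hy : y ∈ powDom f (D : Set M) k) :
    c • x + y ∈ powDom f (D : Set M) k ∧ f^[k] (c • x + y) = c • f^[k] x + f^[k] y := by
  induction k generalizing x y with
  | zero => exact ⟨trivial, rfl⟩
  | succ k ih =>
    have hf := hlin c x hx.1 y hy.1
    obtain ⟨hmem, heq⟩ := ih hx.2 hy.2
    refine ⟨⟨D.add_mem (D.smul_mem c hx.1) hy.1, hf ▸ hmem⟩, ?_⟩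
    simp only [Function.iterate_succ_apply, hf, heq]

section LogConvexSequence

variable {u : ℕ → ℝ} {n : ℕ} (hu : ∀ k, 0 ≤ u k)
  (hlc : ∀ k, k + 2 ≤ n → u (k + 1) ^ 2 ≤ u k * u (k + 2))
include hu hlc

theorem mul_le_mul_succ_of_sq_le_mul (k : ℕ) (hk : k + 1 ≤ n) :
    u 1 * u k ≤ u 0 * u (k + 1) := by
  induction k with
  | zero => rw [mul_comm]
  | succ k ih =>
    rcases (hu (k + 1)).eq_or_lt with hzero | hpos
    · rw [← hzero, mul_zero]
      exact mul_nonneg (hu 0) (hu _)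
    · refine le_of_mul_le_mul_left ?_ hpos
      nlinarith [ih (by omega), hlc k hk, hu 1, hu (k + 2)]

theorem pow_succ_le_pow_mul_of_sq_le_mul (k : ℕ) (hk : k + 1 ≤ n) :
    u 1 ^ (k + 1) ≤ u 0 ^ k * u (k + 1) := by
  induction k with
  | zero => simp
  | succ k ih =>
    calc u 1 ^ (k + 2) = u 1 ^ (k + 1) * u 1 := pow_succ _ _
      _ ≤ u 0 ^ k * u (k + 1) * u 1 := by gcongr; exacts [hu 1, ih (by omega)]
      _ = u 0 ^ k * (u 1 * u (k + 1)) := by ring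
      _ ≤ u 0 ^ k * (u 0 * u (k + 2)) :=
        mul_le_mul_of_nonneg_left (mul_le_mul_succ_of_sq_le_mul hu hlc (k + 1) hk)
          (pow_nonneg (hu 0) k)
      _ = u 0 ^ (k + 1) * u (k + 2) := by ring

theorem le_max_endpoints_of_sq_le_mul (hn : 1 ≤ n) : u 1 ≤ max (u 0) (u n) := by
  obtain ⟨k, rfl⟩ : ∃ k, n = k + 1 := ⟨n - 1, by omega⟩
  have hmax : 0 ≤ max (u 0) (u (k + 1)) := (hu 0).trans (le_max_left _ _)
  refine le_of_pow_le_pow_left₀ k.succ_ne_zero hmax ?_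
  calc u 1 ^ (k + 1) ≤ u 0 ^ k * u (k + 1) := pow_succ_le_pow_mul_of_sq_le_mul hu hlc k le_rfl
    _ ≤ max (u 0) (u (k + 1)) ^ k * max (u 0) (u (k + 1)) :=
      mul_le_mul (pow_le_pow_left₀ (hu 0) (le_max_left _ _) k) (le_max_right _ _) (hu _)
        (pow_nonneg hmax k)
    _ = max (u 0) (u (k + 1)) ^ (k + 1) := (pow_succ _ _).symm

end LogConvexSequence

section Symmetric

variable {𝕜 E : Type*} [RCLike 𝕜] [NormedAddCommGroup E] [InnerProductSpace 𝕜 E]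
  {D : Submodule 𝕜 E} {f : E → E}
  (hsym : ∀ x ∈ D, ∀ y ∈ D, (inner 𝕜 (f x) y : 𝕜) = inner 𝕜 x (f y))
include hsym

theorem map_smul_add_of_symm (hdense : Dense (D : Set E)) (c : 𝕜) (x : E) (hx : x ∈ D)
    (y : E) (hy : y ∈ D) : f (c • x + y) = c • f x + f y := by
  refine hdense.eq_of_inner_left 𝕜 fun z hz => ?_
  rw [hsym _ (D.add_mem (D.smul_mem c hx) hy) _ hz, inner_add_left, inner_add_left,
    inner_smul_left, inner_smul_left, hsym _ hx _ hz, hsym _ hy _ hz]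

theorem sq_norm_map_le_of_symm {x : E} (hx : x ∈ D) (hfx : f x ∈ D) :
    ‖f x‖ ^ 2 ≤ ‖x‖ * ‖f (f x)‖ := by
  calc ‖f x‖ ^ 2 = ‖(inner 𝕜 (f x) (f x) : 𝕜)‖ := by
        rw [inner_self_eq_norm_sq_to_K, norm_pow, RCLike.norm_ofReal, abs_norm]
    _ = ‖(inner 𝕜 x (f (f x)) : 𝕜)‖ := by rw [hsym x hx (f x) hfx]
    _ ≤ ‖x‖ * ‖f (f x)‖ := norm_inner_le_norm _ _

theorem norm_map_le_max_of_mem_powDom {n : ℕ} (hn : 1 ≤ n) {ψ : E}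
    (hψ : ψ ∈ powDom f (D : Set E) n) : ‖f ψ‖ ≤ max ‖ψ‖ ‖f^[n] ψ‖ := by
  have hmem := mem_powDom_iff.1 hψ
  refine le_max_endpoints_of_sq_le_mul (u := fun k => ‖f^[k] ψ‖) (fun _ => norm_nonneg _)
    (fun k hk => ?_) hn
  have hk₁ : f (f^[k] ψ) ∈ (D : Set E) := by
    simpa only [Function.iterate_succ_apply'] using hmem (k + 1) (by omega)
  simpa only [Function.iterate_succ_apply'] using
    sq_norm_map_le_of_symm hsym (hmem k (by omega)) hk₁

end Symmetric

theorem norm_smul_add_le_mul_of_one_le {E : Type*} [SeminormedAddCommGroup E] [NormedSpace ℝ E]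
    {s : ℝ} (hs : 1 ≤ s) (x y : E) : ‖s • x + y‖ ≤ s * (‖x‖ + ‖y‖) := by
  calc ‖s • x + y‖ ≤ s * ‖x‖ + ‖y‖ := by
        refine (norm_add_le _ _).trans ?_
        rw [norm_smul, Real.norm_of_nonneg (by linarith)]
    _ ≤ s * (‖x‖ + ‖y‖) := by nlinarith [norm_nonneg y]

section Rescaled

variable {H : Type*} [NormedAddCommGroup H] [InnerProductSpace ℂ H] {D : Submodule ℂ H}
  {f v : H → H} (hdense : Dense (D : Set H))
  (hsym : ∀ x ∈ D, ∀ y ∈ D, (inner ℂ (f x) y : ℂ) = inner ℂ x (f y))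
  {a b : ℝ} (hV : ∀ ψ ∈ D, ‖v ψ‖ ≤ a * ‖f ψ‖ + b * ‖ψ‖)
include hdense hsym hV

theorem norm_rescaled_iterate_succ_le {m : ℕ} {aₘ bₘ c d s : ℝ} (ha : 0 ≤ a) (hc : 0 ≤ c)
    (hd : 0 ≤ d) (hs : 1 ≤ s)
    (hvm : ∀ ψ ∈ powDom f (D : Set H) (m + 1), v ψ ∈ powDom f (D : Set H) m ∧
      ‖f^[m] (v ψ)‖ ≤ aₘ * ‖f^[m + 1] ψ‖ + bₘ * ‖ψ‖)
    (ih : ∀ χ ∈ powDom f (D : Set H) m, ‖(fun φ => s • f φ + v φ)^[m] χ‖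
      ≤ c * s ^ m * ‖f^[m] χ‖ + d * s ^ m * ‖χ‖)
    {ψ : H} (hψ : ψ ∈ powDom f (D : Set H) (m + 1)) :
    ‖(fun φ => s • f φ + v φ)^[m + 1] ψ‖ ≤ (c * (1 + aₘ) + d * (1 + a)) * s ^ (m + 1) *
      ‖f^[m + 1] ψ‖ + (c * bₘ + d * (1 + a + b)) * s ^ (m + 1) * ‖ψ‖ := by
  obtain ⟨hvψ, hvψ_le⟩ := hvm ψ hψ
  obtain ⟨hAψ, hfAψ⟩ : s • f ψ + v ψ ∈ powDom f (D : Set H) m ∧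
      f^[m] (s • f ψ + v ψ) = s • f^[m + 1] ψ + f^[m] (v ψ) := by
    simpa only [Complex.coe_smul, Function.iterate_succ_apply] using
      iterate_smul_add_of_mem_powDom (map_smul_add_of_symm hsym hdense) (s : ℂ) hψ.2 hvψ
  have hfψ : ‖f ψ‖ ≤ ‖f^[m + 1] ψ‖ + ‖ψ‖ :=
    (norm_map_le_max_of_mem_powDom hsym m.succ_pos hψ).trans
      ((max_le_add_of_nonneg (norm_nonneg _) (norm_nonneg _)).trans_eq (add_comm _ _))
  have hfAψ_le : ‖f^[m] (s • f ψ + v ψ)‖ ≤ s * ((1 + aₘ) * ‖f^[m + 1] ψ‖ + bₘ * ‖ψ‖) := by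
    rw [hfAψ]
    refine (norm_smul_add_le_mul_of_one_le hs _ _).trans ?_
    gcongr s * ?_
    linarith
  have hAψ_le : ‖s • f ψ + v ψ‖ ≤ s * ((1 + a) * (‖f^[m + 1] ψ‖ + ‖ψ‖) + b * ‖ψ‖) := by
    refine (norm_smul_add_le_mul_of_one_le hs _ _).trans ?_
    gcongr s * ?_
    nlinarith [hV ψ hψ.1, norm_nonneg (f ψ)]
  calc ‖(fun φ => s • f φ + v φ)^[m + 1] ψ‖
      = ‖(fun φ => s • f φ + v φ)^[m] (s • f ψ + v ψ)‖ := by rw [Function.iterate_succ_apply]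
    _ ≤ c * s ^ m * ‖f^[m] (s • f ψ + v ψ)‖ + d * s ^ m * ‖s • f ψ + v ψ‖ := ih _ hAψ
    _ ≤ c * s ^ m * (s * ((1 + aₘ) * ‖f^[m + 1] ψ‖ + bₘ * ‖ψ‖))
        + d * s ^ m * (s * ((1 + a) * (‖f^[m + 1] ψ‖ + ‖ψ‖) + b * ‖ψ‖)) := by
      gcongr
    _ = _ := by ring

theorem exists_norm_rescaled_iterate_le (ha : 0 ≤ a) (hb : 0 ≤ b)
    (hrel : ∀ m : ℕ, ∃ aₘ bₘ : ℝ, 0 ≤ aₘ ∧ 0 ≤ bₘ ∧ ∀ ψ ∈ powDom f (D : Set H) (m + 1),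
      v ψ ∈ powDom f (D : Set H) m ∧ ‖f^[m] (v ψ)‖ ≤ aₘ * ‖f^[m + 1] ψ‖ + bₘ * ‖ψ‖)
    (m : ℕ) : ∃ c d : ℝ, 0 ≤ c ∧ 0 ≤ d ∧ ∀ s : ℝ, 1 ≤ s → ∀ ψ ∈ powDom f (D : Set H) m,
      ‖(fun φ => s • f φ + v φ)^[m] ψ‖ ≤ c * s ^ m * ‖f^[m] ψ‖ + d * s ^ m * ‖ψ‖ := by
  induction m with
  | zero => exact ⟨0, 1, le_rfl, zero_le_one, fun s _ ψ _ => by simp⟩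
  | succ m ih =>
    obtain ⟨c, d, hc, hd, hbound⟩ := ih
    obtain ⟨aₘ, bₘ, haₘ, hbₘ, hvm⟩ := hrel m
    exact ⟨c * (1 + aₘ) + d * (1 + a), c * bₘ + d * (1 + a + b), by positivity, by positivity,
      fun s hs ψ hψ => norm_rescaled_iterate_succ_le hdense hsym hV ha hc hd hs hvm
        (hbound s hs) hψ⟩

end Rescaled

theorem rescaled_power_graph_norm_bound_general
    {H : Type*} [NormedAddCommGroup H] [InnerProductSpace ℂ H]
    (D : Submodule ℂ H) (hdense : Dense (D : Set H))
    (f v : H → H)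
    (hsymH : ∀ ψ ∈ D, ∀ φ ∈ D, (inner ℂ (f ψ) φ : ℂ) = inner ℂ ψ (f φ))
    (DV : Set H)
    (a b : ℝ) (ha : 0 ≤ a) (hb : 0 ≤ b)
    (hV : ∀ ψ ∈ D, ‖v ψ‖ ≤ a * ‖f ψ‖ + b * ‖ψ‖)
    (hrel : ∀ m : ℕ, ∃ aₘ bₘ : ℝ, 0 ≤ aₘ ∧ 0 ≤ bₘ ∧
      ∀ ψ ∈ powDom f (D : Set H) (m + 1),
        ψ ∈ DV ∧ v ψ ∈ powDom f (D : Set H) m ∧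
          ‖f^[m] (v ψ)‖ ≤ aₘ * ‖f^[m + 1] ψ‖ + bₘ * ‖ψ‖) :
    ∀ m : ℕ, ∃ c d : ℝ, 0 ≤ c ∧ 0 ≤ d ∧
      ∀ T : ℝ, 0 < T → T < 1 → ((2 ^ m - 1 : ℝ) * a) * T < 1 →
        ∀ ψ ∈ powDom f (D : Set H) m,
          ‖(fun φ => T⁻¹ • f φ + v φ)^[m] ψ‖
            ≤ c * (T ^ m)⁻¹ * ‖f^[m] ψ‖ + d * (T ^ m)⁻¹ * ‖ψ‖ := by
  intro m
  obtain ⟨c, d, hc, hd, hbound⟩ := exists_norm_rescaled_iterate_le hdense hsymH hV ha hb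
    (fun k => (hrel k).imp fun _ => Exists.imp fun _ h => ⟨h.1, h.2.1, fun ψ hψ => (h.2.2 ψ hψ).2⟩) m
  refine ⟨c, d, hc, hd, fun T hT hT1 _ ψ hψ => ?_⟩
  simpa only [inv_pow] using hbound T⁻¹ ((one_le_inv₀ hT).2 hT1.le) ψ hψ

/-- Let `H₀` be self-adjoint (encoded by `f` with dense domain `D`) and `V`
symmetric on a Hilbert space `H` with `D(H₀) ⊆ D(V)` and `‖Vψ‖ ≤ a‖H₀ψ‖ + b‖ψ‖` on `D(H₀)`,
`a, b ≥ 0`; assume moreover (cf. the context) that for every `m`, `H₀^m V` is `H₀^{m+1}`-bounded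
with `T`-independent constants. Then for every `m ∈ ℕ` there exist constants `cₘ, dₘ ≥ 0`
(independent of `T`) such that for all `0 < T < min(1, 1/((2^m − 1)a))` and all `ψ ∈ D(H₀^m)`:
`‖((1/T)H₀ + V)^m ψ‖ ≤ cₘ T^{−m} ‖H₀^m ψ‖ + dₘ T^{−m} ‖ψ‖`. -/
theorem rescaled_power_graph_norm_bound
    {H : Type*} [NormedAddCommGroup H] [InnerProductSpace ℂ H] [CompleteSpace H]
    (D : Submodule ℂ H) (hdense : Dense (D : Set H))
    (f v : H → H)
    (hsymH : ∀ ψ ∈ D, ∀ φ ∈ D, (inner ℂ (f ψ) φ : ℂ) = inner ℂ ψ (f φ))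
    (hsaH : ∀ φ : H, (∃ η : H, ∀ ψ ∈ D, (inner ℂ φ (f ψ) : ℂ) = inner ℂ η ψ) → φ ∈ D)
    (DV : Set H) (hDV : (D : Set H) ⊆ DV)
    (hsymV : ∀ ψ ∈ DV, ∀ φ ∈ DV, (inner ℂ (v ψ) φ : ℂ) = inner ℂ ψ (v φ))
    (a b : ℝ) (ha : 0 ≤ a) (hb : 0 ≤ b)
    (hV : ∀ ψ ∈ D, ‖v ψ‖ ≤ a * ‖f ψ‖ + b * ‖ψ‖)
    (hrel : ∀ m : ℕ, ∃ aₘ bₘ : ℝ, 0 ≤ aₘ ∧ 0 ≤ bₘ ∧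
      ∀ ψ ∈ powDom f (D : Set H) (m + 1),
        ψ ∈ DV ∧ v ψ ∈ powDom f (D : Set H) m ∧
          ‖f^[m] (v ψ)‖ ≤ aₘ * ‖f^[m + 1] ψ‖ + bₘ * ‖ψ‖) :
    ∀ m : ℕ, ∃ c d : ℝ, 0 ≤ c ∧ 0 ≤ d ∧
      ∀ T : ℝ, 0 < T → T < 1 → ((2 ^ m - 1 : ℝ) * a) * T < 1 →
        ∀ ψ ∈ powDom f (D : Set H) m,
          ‖(fun φ => T⁻¹ • f φ + v φ)^[m] ψ‖
            ≤ c * (T ^ m)⁻¹ * ‖f^[m] ψ‖ + d * (T ^ m)⁻¹ * ‖ψ‖ :=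
  rescaled_power_graph_norm_bound_general D hdense f v hsymH DV a b ha hb hV hrel
end
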